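/- arXiv:1509.08100 — 2 statements merged into one kernel-verified Lean document; each statement's English description precedes it below -/
import Mathlib

section
/- Under the asymptotic framework with p_m → 0, let α_m ∈ (0,1) and let ω_{B,m} > 0 be a solution of the BFDR equation (1 − D(ω))/(1 − D(ω·(1+u_m)^(−1/2))) = r_{α_m}/f_m, where r_α = α/(1−α) and f_m = (1−p_m)/p_m. If δ_m·r_{α_m} → C_1/(1 − C_2), then ω_{B,m}² = C_B·(f_m/r_{α_m})^(2/γ)·(1 + o(1)), i.e., ω_{B,m}²/(C_B·(f_m/r_{α_m})^(2/γ)) → 1, where C_B = [(C_d/γ)/(1 − D(√C))]^(2/γ), C_1 = 2√C·d(√C)/γ and C_2 = 2D(√C) − 1. -/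
/-!
Write `H x = d x * x ^ (γ + 1)` and `g x = x ^ γ * (1 - D x)`. The likelihood-ratio condition
makes `H` strictly increasing on `(0, ∞)` with limit `Cd`, and the substitution `t = x s` gives
`g x = ∫_{s > 1} H (x s) s ^ (-(γ + 1)) ds`; hence `g` is strictly increasing with limit `Cd / γ`.
The BFDR equation forces `1 - D ω_m → 0`, so `ω_m → ∞` and `g ω_m → Cd / γ`. Rescaling the
equation, `g` at the shrunken threshold `t_m = ω_m (1 + u_m) ^ (-1/2)` tends to `g √C`, so
`t_m → √C` by strict monotonicity, and finally
`ω_m ^ γ * r_m / f_m = g ω_m / (1 - D t_m) → (Cd / γ) / (1 - D √C)`.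
-/

open MeasureTheory Filter

/-- Cumulative distribution function of a density `d` with respect to Lebesgue measure. -/
noncomputable def cdf (d : ℝ → ℝ) (x : ℝ) : ℝ := ∫ t in Set.Iic x, d t

/-- A monotone polynomial tail (MPT) density with tail index `γ` and tail constant `Cd`:
a probability density function that is even (or supported on the nonnegative half-line),
strictly positive on `(0, ∞)`, satisfies `d x * x ^ (γ + 1) → Cd` as `x → ∞`, and has a
monotone likelihood ratio: for every `θ > 1`, `x ↦ d (x / θ) / d x` is strictly increasing
on `(0, ∞)`. -/
structure IsMPT (d : ℝ → ℝ) (γ Cd : ℝ) : Prop where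
  gamma_pos : 0 < γ
  Cd_pos : 0 < Cd
  nonneg : ∀ x, 0 ≤ d x
  integrable : Integrable d
  integral_one : ∫ x, d x = 1
  even_or_halfline : (∀ x, d (-x) = d x) ∨ (∀ x < 0, d x = 0)
  pos : ∀ x, 0 < x → 0 < d x
  tail : Tendsto (fun x => d x * x ^ (γ + 1)) atTop (nhds Cd)
  mlr : ∀ θ : ℝ, 1 < θ → StrictMonoOn (fun x => d (x / θ) / d x) (Set.Ioi 0)

open Set Real Topology

section Order

variable {α β ι : Type*} [LinearOrder α] [LinearOrder β] [TopologicalSpace β]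
  [OrderClosedTopology β]

theorem StrictMonoOn.lt_of_tendsto_atTop [NoMaxOrder α] {φ : α → β} {a x : α} {L : β}
    (hφ : StrictMonoOn φ (Ioi a)) (hL : Tendsto φ atTop (𝓝 L)) (hx : a < x) : φ x < L := by
  have : Nonempty α := ⟨x⟩
  obtain ⟨y, hxy⟩ := exists_gt x
  refine (hφ hx (hx.trans hxy) hxy).trans_le (ge_of_tendsto hL ?_)
  filter_upwards [eventually_ge_atTop y] with z hz
  exact hφ.monotoneOn (hx.trans hxy) (hx.trans (hxy.trans_le hz)) hz

variable [TopologicalSpace α] [OrderTopology α] [DenselyOrdered α]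

theorem StrictMonoOn.eventually_gt_of_tendsto_comp {φ : α → β} {s : Set α} {l : Filter ι}
    {t : ι → α} {x a : α} (hφ : StrictMonoOn φ s) (hs : s ∈ 𝓝 x) (ht : ∀ᶠ i in l, t i ∈ s)
    (h : Tendsto (φ ∘ t) l (𝓝 (φ x))) (ha : a < x) : ∀ᶠ i in l, a < t i := by
  obtain ⟨c, hcx, hcs⟩ := exists_Ioc_subset_of_mem_nhds hs ⟨a, ha⟩
  obtain ⟨b, hab, hbx⟩ := exists_between (max_lt ha hcx)
  have hbs : b ∈ s := hcs ⟨(le_max_right a c).trans_lt hab, hbx.le⟩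
  filter_upwards [ht, h.eventually (eventually_gt_nhds (hφ hbs (mem_of_mem_nhds hs) hbx))]
    with i hti hφi
  exact ((le_max_left a c).trans_lt hab).trans (hφ.lt_iff_lt hbs hti |>.1 hφi)

theorem StrictMonoOn.tendsto_of_tendsto_comp {φ : α → β} {s : Set α} {l : Filter ι}
    {t : ι → α} {x : α} (hφ : StrictMonoOn φ s) (hs : s ∈ 𝓝 x) (ht : ∀ᶠ i in l, t i ∈ s)
    (h : Tendsto (φ ∘ t) l (𝓝 (φ x))) : Tendsto t l (𝓝 x) :=
  tendsto_order.2 ⟨fun _ ha => hφ.eventually_gt_of_tendsto_comp hs ht h ha,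
    fun _ ha => StrictMonoOn.eventually_gt_of_tendsto_comp (α := αᵒᵈ) (β := βᵒᵈ) hφ.dual hs ht h ha⟩

end Order

theorem setIntegral_lt_setIntegral_of_lt {X : Type*} [MeasurableSpace X] {μ : Measure X}
    {f g : X → ℝ} {s : Set X} (hs : MeasurableSet s) (hμs : μ s ≠ 0)
    (hf : IntegrableOn f s μ) (hg : IntegrableOn g s μ) (hlt : ∀ x ∈ s, f x < g x) :
    ∫ x in s, f x ∂μ < ∫ x in s, g x ∂μ := by
  have hsupp : (Function.support fun x => g x - f x) ∩ s = s :=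
    inter_eq_self_of_subset_right fun x hx => sub_ne_zero.2 (hlt x hx).ne'
  rw [← sub_pos, ← integral_sub hg hf, setIntegral_pos_iff_support_of_nonneg_ae
    ((ae_restrict_iff' hs).2 (ae_of_all _ fun x hx => sub_nonneg.2 (hlt x hx).le)) (hg.sub hf),
    hsupp]
  exact pos_iff_ne_zero.2 hμs

theorem mul_rpow_mul_rpow_neg (c : ℝ) {a x s : ℝ} (hx : 0 ≤ x) (hs : 0 < s) :
    c * (x * s) ^ a * s ^ (-a) = x ^ a * c := by
  rw [mul_rpow hx hs.le, rpow_neg hs.le]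
  field_simp [(rpow_pos_of_pos hs a).ne']

section Asymptotics

variable {ι : Type*} {l : Filter ι}

theorem tendsto_inv_of_tendsto_rpow_mul {s F : ι → ℝ} {γ L : ℝ} (hγ : 0 < γ) (hL : L ≠ 0)
    (hs : ∀ i, 0 < s i) (hs0 : Tendsto s l (𝓝 0)) (h : Tendsto (fun i => s i ^ γ * F i) l (𝓝 L)) :
    Tendsto (fun i => (F i)⁻¹) l (𝓝 0) := by
  have hpow := hs0.rpow_const (p := γ) (Or.inr hγ.le)
  rw [zero_rpow hγ.ne'] at hpow
  have hlim := hpow.mul (h.inv₀ hL)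
  rw [zero_mul] at hlim
  refine hlim.congr fun i => ?_
  rw [mul_inv, mul_inv_cancel_left₀ (rpow_pos_of_pos (hs i) γ).ne']

theorem tendsto_one_add_rpow_neg_one_half_rpow_mul_div {δ f r u : ι → ℝ} {γ C₀ Q : ℝ}
    (hδ : ∀ i, δ i ≠ 0) (hu : ∀ i, 0 < u i) (hu' : Tendsto u l atTop)
    (hvu : Tendsto (fun i => δ i * f i * u i ^ (-(γ / 2))) l (𝓝 C₀))
    (hδr : Tendsto (fun i => δ i * r i) l (𝓝 Q)) (hQ : Q ≠ 0) :
    Tendsto (fun i => ((1 + u i) ^ (-(1 : ℝ) / 2)) ^ γ * (f i / r i)) l (𝓝 (C₀ / Q)) := by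
  have hfrac : Tendsto (fun i => u i / (1 + u i)) l (𝓝 1) := by
    have hlim := tendsto_const_nhds (x := (1 : ℝ)).sub
      (tendsto_atTop_add_const_left _ 1 hu').inv_tendsto_atTop
    rw [sub_zero] at hlim
    refine hlim.congr fun i => ?_
    simp only [Pi.inv_apply]
    field_simp [(by linarith [hu i] : 1 + u i ≠ 0)]
    ring
  have hlim := (hvu.mul (hδr.inv₀ hQ)).mul (hfrac.rpow_const (p := γ / 2) (Or.inl one_ne_zero))
  rw [one_rpow, mul_one, ← div_eq_mul_inv] at hlim
  refine hlim.congr fun i => ?_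
  have hu0 := hu i
  rw [← rpow_mul (by linarith), div_rpow hu0.le (by linarith), rpow_neg hu0.le,
    show -(1 : ℝ) / 2 * γ = -(γ / 2) by ring, rpow_neg (by linarith)]
  field_simp [hδ i, (rpow_pos_of_pos hu0 (γ / 2)).ne']

theorem tendsto_one_add_rpow_neg_one_half {u : ι → ℝ} (hu : Tendsto u l atTop) :
    Tendsto (fun i => (1 + u i) ^ (-(1 : ℝ) / 2)) l (𝓝 0) := by
  refine ((tendsto_rpow_neg_atTop one_half_pos).comp
    (tendsto_atTop_add_const_left _ 1 hu)).congr fun i => ?_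
  rw [Function.comp_apply, neg_div]

theorem tendsto_sq_div_of_tendsto_rpow_div {ω F : ι → ℝ} {γ K : ℝ} (hγ : γ ≠ 0) (hK : 0 < K)
    (hω : ∀ i, 0 < ω i) (hF : ∀ i, 0 < F i) (h : Tendsto (fun i => ω i ^ γ / F i) l (𝓝 K)) :
    Tendsto (fun i => ω i ^ 2 / (K ^ (2 / γ) * F i ^ (2 / γ))) l (𝓝 1) := by
  have hlim := (h.div_const K).rpow_const (p := 2 / γ) (Or.inl (div_ne_zero hK.ne' hK.ne'))
  rw [div_self hK.ne', one_rpow] at hlim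
  refine hlim.congr fun i => ?_
  rw [div_rpow (div_pos (rpow_pos_of_pos (hω i) γ) (hF i)).le hK.le,
    div_rpow (rpow_pos_of_pos (hω i) γ).le (hF i).le, ← rpow_mul (hω i).le,
    mul_div_cancel₀ _ hγ, rpow_two, div_div, mul_comm]

end Asymptotics

noncomputable def survival (d : ℝ → ℝ) (x : ℝ) : ℝ := ∫ t in Ioi x, d t

section Survival

variable {d : ℝ → ℝ} {γ : ℝ}

theorem one_sub_cdf_eq_survival (hd : Integrable d) (h1 : ∫ x, d x = 1) (x : ℝ) :
    1 - cdf d x = survival d x := by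
  rw [← h1, ← integral_add_compl measurableSet_Iic hd, compl_Iic, cdf, survival,
    add_sub_cancel_left]

theorem survival_nonneg (h0 : ∀ x, 0 ≤ d x) (x : ℝ) : 0 ≤ survival d x :=
  setIntegral_nonneg measurableSet_Ioi fun t _ => h0 t

theorem survival_antitone (hd : Integrable d) (h0 : ∀ x, 0 ≤ d x) : Antitone (survival d) :=
  fun _ _ hab => setIntegral_mono_set hd.integrableOn (ae_of_all _ h0)
    (Ioi_subset_Ioi hab).eventuallyLE

theorem continuous_survival (hd : Integrable d) : Continuous (survival d) :=
  continuous_iff_continuousAt.2 fun x =>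
    (hd.integrableOn.continuousOn_Ici_primitive_Ioi (a₀ := x - 1)).continuousAt
      (Ici_mem_nhds (by linarith))

-- the substitution `t = x * s` turns the tail integral into an integral over the fixed set `s > 1`
theorem rpow_mul_survival_eq_integral {x : ℝ} (hx : 0 < x) :
    x ^ γ * survival d x = ∫ s in Ioi 1, d (x * s) * (x * s) ^ (γ + 1) * s ^ (-(γ + 1)) := by
  have hsub : survival d x = x * ∫ s in Ioi 1, d (x * s) := by
    rw [integral_comp_mul_left_Ioi d 1 hx, smul_eq_mul, mul_one, mul_inv_cancel_left₀ hx.ne',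
      survival]
  rw [setIntegral_congr_fun measurableSet_Ioi fun s (hs : 1 < s) =>
    mul_rpow_mul_rpow_neg _ hx.le (one_pos.trans hs), integral_const_mul, hsub,
    rpow_add_one hx.ne']
  ring

theorem integrableOn_comp_mul_mul_rpow_mul_rpow_neg (hd : Integrable d) {x : ℝ} (hx : 0 < x) :
    IntegrableOn (fun s => d (x * s) * (x * s) ^ (γ + 1) * s ^ (-(γ + 1))) (Ioi 1) :=
  ((hd.comp_mul_left' hx.ne').const_mul (x ^ (γ + 1))).integrableOn.congr_fun
    (fun s (hs : 1 < s) => (mul_rpow_mul_rpow_neg _ hx.le (one_pos.trans hs)).symm)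
    measurableSet_Ioi

end Survival

namespace IsMPT

variable {d : ℝ → ℝ} {γ Cd : ℝ} {ι : Type*} {l : Filter ι}

theorem tendsto_likelihoodRatio (h : IsMPT d γ Cd) {θ : ℝ} (hθ : 0 < θ) :
    Tendsto (fun x => d (x / θ) / d x) atTop (𝓝 (θ ^ (γ + 1))) := by
  have hlim := ((h.tail.comp (tendsto_id.atTop_div_const hθ)).div h.tail h.Cd_pos.ne').mul_const
    (θ ^ (γ + 1))
  rw [div_self h.Cd_pos.ne', one_mul] at hlim
  refine hlim.congr' ?_
  filter_upwards [eventually_gt_atTop 0] with x hx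
  have hpow : (x / θ) ^ (γ + 1) * θ ^ (γ + 1) = x ^ (γ + 1) := by
    rw [← mul_rpow (div_pos hx hθ).le hθ.le, div_mul_cancel₀ _ hθ.ne']
  have := (h.pos x hx).ne'
  have := (rpow_pos_of_pos hx (γ + 1)).ne'
  simp only [Pi.div_apply, Function.comp_apply, id]
  field_simp
  rw [← hpow]
  ring

theorem strictMonoOn_mul_rpow (h : IsMPT d γ Cd) :
    StrictMonoOn (fun x => d x * x ^ (γ + 1)) (Ioi 0) := by
  intro a (ha : 0 < a) b (hb : 0 < b) hab
  have hθ : 1 < b / a := (one_lt_div ha).2 hab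
  -- the increasing likelihood ratio stays below its limit `θ ^ (γ + 1)`
  have hlt := (h.mlr _ hθ).lt_of_tendsto_atTop (h.tendsto_likelihoodRatio (by linarith)) hb
  rw [div_div_cancel₀ hb.ne', div_lt_iff₀ (h.pos b hb), div_rpow hb.le ha.le,
    div_mul_eq_mul_div, lt_div_iff₀ (rpow_pos_of_pos ha _)] at hlt
  simpa only [mul_comm] using hlt

theorem mul_rpow_lt (h : IsMPT d γ Cd) {x : ℝ} (hx : 0 < x) : d x * x ^ (γ + 1) < Cd :=
  h.strictMonoOn_mul_rpow.lt_of_tendsto_atTop h.tail hx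

theorem strictMonoOn_rpow_mul_survival (h : IsMPT d γ Cd) :
    StrictMonoOn (fun x => x ^ γ * survival d x) (Ioi 0) := by
  intro a (ha : 0 < a) b (hb : 0 < b) hab
  simp only [rpow_mul_survival_eq_integral ha, rpow_mul_survival_eq_integral hb]
  refine setIntegral_lt_setIntegral_of_lt measurableSet_Ioi (by simp)
    (integrableOn_comp_mul_mul_rpow_mul_rpow_neg h.integrable ha)
    (integrableOn_comp_mul_mul_rpow_mul_rpow_neg h.integrable hb) fun s (hs : 1 < s) => ?_
  have hs0 : 0 < s := one_pos.trans hs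
  exact mul_lt_mul_of_pos_right (h.strictMonoOn_mul_rpow (mul_pos ha hs0) (mul_pos hb hs0)
    (mul_lt_mul_of_pos_right hab hs0)) (rpow_pos_of_pos hs0 _)

theorem tendsto_rpow_mul_survival (h : IsMPT d γ Cd) :
    Tendsto (fun x => x ^ γ * survival d x) atTop (𝓝 (Cd / γ)) := by
  have hγ := h.gamma_pos
  have hlim : ∫ s in Ioi 1, Cd * s ^ (-(γ + 1)) = Cd / γ := by
    rw [integral_const_mul, integral_Ioi_rpow_of_lt (by linarith) one_pos, one_rpow,
      show -(γ + 1) + 1 = -γ by ring, neg_div_neg_eq, mul_one_div]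
  rw [← hlim]
  refine (tendsto_integral_filter_of_dominated_convergence _ ?_ ?_
    ((integrableOn_Ioi_rpow_of_lt (a := -(γ + 1)) (by linarith) one_pos).const_mul Cd) ?_).congr'
    ((eventually_gt_atTop 0).mono fun x hx => (rpow_mul_survival_eq_integral hx).symm)
  · filter_upwards [eventually_gt_atTop 0] with x hx
    exact (integrableOn_comp_mul_mul_rpow_mul_rpow_neg h.integrable hx).aestronglyMeasurable
  · filter_upwards [eventually_gt_atTop 0] with x hx
    refine (ae_restrict_iff' measurableSet_Ioi).2 (ae_of_all _ fun s (hs : 1 < s) => ?_)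
    have hs0 : 0 < s := one_pos.trans hs
    have hxs := mul_pos hx hs0
    rw [Real.norm_of_nonneg (by have := h.nonneg (x * s); positivity)]
    exact mul_le_mul_of_nonneg_right (h.mul_rpow_lt hxs).le (rpow_pos_of_pos hs0 _).le
  · refine (ae_restrict_iff' measurableSet_Ioi).2 (ae_of_all _ fun s (hs : 1 < s) => ?_)
    exact (h.tail.comp (tendsto_id.atTop_mul_const (one_pos.trans hs))).mul_const _

theorem survival_pos (h : IsMPT d γ Cd) {x : ℝ} (hx : 0 < x) : 0 < survival d x := by
  have hlt := h.strictMonoOn_rpow_mul_survival (half_pos hx) hx (half_lt_self hx)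
  have hnonneg : 0 ≤ (x / 2) ^ γ * survival d (x / 2) :=
    mul_nonneg (rpow_nonneg (half_pos hx).le _) (survival_nonneg h.nonneg _)
  exact pos_of_mul_pos_right (hnonneg.trans_lt hlt) (rpow_nonneg hx.le _)

theorem survival_le_one (h : IsMPT d γ Cd) (x : ℝ) : survival d x ≤ 1 :=
  h.integral_one ▸ setIntegral_le_integral h.integrable (Eventually.of_forall h.nonneg)

theorem tendsto_atTop_of_tendsto_survival (h : IsMPT d γ Cd) {ω : ι → ℝ}
    (hω : Tendsto (fun i => survival d (ω i)) l (𝓝 0)) : Tendsto ω l atTop := by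
  refine tendsto_atTop.2 fun b => ?_
  have hpos := h.survival_pos (lt_max_of_lt_right one_pos : (0 : ℝ) < max b 1)
  filter_upwards [hω.eventually (eventually_lt_nhds hpos)] with i hi
  exact (le_max_left b 1).trans ((survival_antitone h.integrable h.nonneg).reflect_lt hi).le

theorem tendsto_rpow_div_of_survival_div (h : IsMPT d γ Cd) {ω s F : ι → ℝ} {x₀ : ℝ}
    (hx₀ : 0 < x₀) (hω : ∀ i, 0 < ω i) (hs : ∀ i, 0 < s i) (hF : ∀ i, 0 < F i)
    (heq : ∀ i, survival d (ω i) / survival d (ω i * s i) = (F i)⁻¹)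
    (hs0 : Tendsto s l (𝓝 0))
    (hscale : Tendsto (fun i => s i ^ γ * F i) l (𝓝 (x₀ ^ γ * survival d x₀ / (Cd / γ)))) :
    Tendsto (fun i => ω i ^ γ / F i) l (𝓝 (Cd / γ / survival d x₀)) := by
  have hγ := h.gamma_pos
  have hK : 0 < Cd / γ := div_pos h.Cd_pos hγ
  have hsurv : ∀ i, survival d (ω i) = survival d (ω i * s i) * (F i)⁻¹ := fun i => by
    rw [← heq i, mul_div_cancel₀ _ (h.survival_pos (mul_pos (hω i) (hs i))).ne']
  have hFinv := tendsto_inv_of_tendsto_rpow_mul hγ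
    (div_pos (mul_pos (rpow_pos_of_pos hx₀ γ) (h.survival_pos hx₀)) hK).ne' hs hs0 hscale
  have hgω := h.tendsto_rpow_mul_survival.comp <| h.tendsto_atTop_of_tendsto_survival <|
    squeeze_zero (fun i => survival_nonneg h.nonneg _)
      (fun i => (hsurv i).trans_le (mul_le_of_le_one_left (inv_pos.2 (hF i)).le
        (h.survival_le_one _))) hFinv
  have hgt := hgω.mul hscale
  rw [mul_div_cancel₀ _ hK.ne'] at hgt
  -- `x ↦ x ^ γ * survival d x` is strictly increasing, so the limit transfers to `ω * s` itself
  have hlim := h.strictMonoOn_rpow_mul_survival.tendsto_of_tendsto_comp (Ioi_mem_nhds hx₀)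
    (Eventually.of_forall fun i => mul_pos (hω i) (hs i)) (hgt.congr fun i => by
      simp only [Function.comp_apply, hsurv i, mul_rpow (hω i).le (hs i).le]
      field_simp [(hF i).ne'])
  refine (hgω.div (((continuous_survival h.integrable).tendsto x₀).comp hlim)
    (h.survival_pos hx₀).ne').congr fun i => ?_
  simp only [Pi.div_apply, Function.comp_apply, hsurv i]
  field_simp [(hF i).ne', (h.survival_pos (mul_pos (hω i) (hs i))).ne']

end IsMPT

theorem BFDR_threshold_form_general (d : ℝ → ℝ) (γ Cd : ℝ) (h : IsMPT d γ Cd)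
    (C : ℝ) (hC : 0 < C)
    (p : ℕ → ℝ) (hp : ∀ m, p m ∈ Set.Ioo (0 : ℝ) 1)
    (u : ℕ → ℝ) (hu : ∀ m, 0 < u m) (hu' : Tendsto u atTop atTop)
    (δ : ℕ → ℝ) (hδ : ∀ m, 0 < δ m)
    (f v : ℕ → ℝ) (hf : ∀ m, f m = (1 - p m) / p m) (hv : ∀ m, v m = δ m * f m)
    (hvu : Tendsto (fun m => v m * u m ^ (-(γ / 2))) atTop
      (nhds (C ^ ((γ + 1) / 2) * d (Real.sqrt C) / Cd)))
    (α : ℕ → ℝ) (hα : ∀ m, α m ∈ Set.Ioo (0 : ℝ) 1)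
    (ωB : ℕ → ℝ) (hωB : ∀ m, 0 < ωB m)
    (hωBeq : ∀ m, (1 - cdf d (ωB m)) / (1 - cdf d (ωB m * (1 + u m) ^ (-(1 : ℝ) / 2)))
      = (α m / (1 - α m)) / f m)
    (hconv : Tendsto (fun m => δ m * (α m / (1 - α m))) atTop
      (nhds ((2 * Real.sqrt C * d (Real.sqrt C) / γ)
        / (1 - (2 * cdf d (Real.sqrt C) - 1))))) :
    Tendsto
      (fun m => ωB m ^ 2 /
        (((Cd / γ) / (1 - cdf d (Real.sqrt C))) ^ (2 / γ)
          * (f m / (α m / (1 - α m))) ^ (2 / γ)))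
      atTop (nhds 1) := by
  have hγ := h.gamma_pos
  have hsC : 0 < √C := sqrt_pos.2 hC
  have hdsC := h.pos _ hsC
  have hTsC := h.survival_pos hsC
  have hcdf := one_sub_cdf_eq_survival h.integrable h.integral_one
  have hF : ∀ m, 0 < f m / (α m / (1 - α m)) := fun m => by
    rw [hf m]
    exact div_pos (div_pos (sub_pos.2 (hp m).2) (hp m).1) (div_pos (hα m).1 (sub_pos.2 (hα m).2))
  have hQ : 2 * √C * d √C / γ / (1 - (2 * cdf d √C - 1)) = √C * d √C / (γ * survival d √C) := by
    rw [show 1 - (2 * cdf d √C - 1) = 2 * survival d √C by rw [← hcdf]; ring]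
    field_simp
  have hconst : C ^ ((γ + 1) / 2) * d √C / Cd / (√C * d √C / (γ * survival d √C))
      = √C ^ γ * survival d √C / (Cd / γ) := by
    rw [show C ^ ((γ + 1) / 2) = √C ^ γ * √C by
      rw [sqrt_eq_rpow, ← rpow_mul hC.le, ← rpow_add hC]; ring_nf]
    field_simp
  have hscale := tendsto_one_add_rpow_neg_one_half_rpow_mul_div (fun m => (hδ m).ne') hu hu'
    (by simpa only [hv] using hvu) hconv (by rw [hQ]; positivity)
  rw [hQ, hconst] at hscale
  have hcore := h.tendsto_rpow_div_of_survival_div hsC hωB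
    (fun m => rpow_pos_of_pos (by linarith [hu m]) _) hF
    (fun m => by simpa only [hcdf, inv_div] using hωBeq m)
    (tendsto_one_add_rpow_neg_one_half hu') hscale
  rw [hcdf]
  exact tendsto_sq_div_of_tendsto_rpow_div hγ.ne' (div_pos (div_pos h.Cd_pos hγ) hTsC) hωB hF hcore

/-- Proposition 3 (form of the BFDR threshold): under the asymptotic framework with `p_m → 0`,
if `δ_m * r_{α_m} → C₁ / (1 - C₂)`, then the threshold `ω_{B,m}` solving the BFDR equation
satisfies `ω_{B,m} ^ 2 = C_B * (f_m / r_{α_m}) ^ (2/γ) * (1 + o(1))`, where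
`C_B = ((Cd / γ) / (1 - D (√C))) ^ (2/γ)`. -/
theorem BFDR_threshold_form (d : ℝ → ℝ) (γ Cd : ℝ) (h : IsMPT d γ Cd)
    (heven : ∀ x, d (-x) = d x) (hcont : ContinuousOn d (Set.Ioi 0))
    (C : ℝ) (hC : 0 < C)
    (p : ℕ → ℝ) (hp : ∀ m, p m ∈ Set.Ioo (0 : ℝ) 1) (hp0 : Tendsto p atTop (nhds 0))
    (u : ℕ → ℝ) (hu : ∀ m, 0 < u m) (hu' : Tendsto u atTop atTop)
    (δ : ℕ → ℝ) (hδ : ∀ m, 0 < δ m)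
    (f v : ℕ → ℝ) (hf : ∀ m, f m = (1 - p m) / p m) (hv : ∀ m, v m = δ m * f m)
    (hvu : Tendsto (fun m => v m * u m ^ (-(γ / 2))) atTop
      (nhds (C ^ ((γ + 1) / 2) * d (Real.sqrt C) / Cd)))
    (α : ℕ → ℝ) (hα : ∀ m, α m ∈ Set.Ioo (0 : ℝ) 1)
    (ωB : ℕ → ℝ) (hωB : ∀ m, 0 < ωB m)
    (hωBeq : ∀ m, (1 - cdf d (ωB m)) / (1 - cdf d (ωB m * (1 + u m) ^ (-(1 : ℝ) / 2)))
      = (α m / (1 - α m)) / f m)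
    (hconv : Tendsto (fun m => δ m * (α m / (1 - α m))) atTop
      (nhds ((2 * Real.sqrt C * d (Real.sqrt C) / γ)
        / (1 - (2 * cdf d (Real.sqrt C) - 1))))) :
    Tendsto
      (fun m => ωB m ^ 2 /
        (((Cd / γ) / (1 - cdf d (Real.sqrt C))) ^ (2 / γ)
          * (f m / (α m / (1 - α m))) ^ (2 / γ)))
      atTop (nhds 1) :=
  BFDR_threshold_form_general d γ Cd h C hC p hp u hu hu' δ hδ f v hf hv hvu α hα ωB hωB hωBeq hconv
end

section
/- For every γ > 0, the Student's t density with γ degrees of freedom, d(x) = C_d·(x² + γ)^(−(γ+1)/2) with C_d = γ^(γ/2)·Γ((γ+1)/2)/(√π·Γ(γ/2)), is an MPT density with tail index γ and tail constant C_d: d is even, d(x) > 0 for all x, d(x)·x^(γ+1) → C_d as x → ∞, and for every θ > 1 the map x ↦ d(x/θ)/d(x) is strictly increasing on (0, ∞). -/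
/-! The Student density is `Cd * k` with `k x = (x ^ 2 + γ) ^ (-s)`, `s = (γ + 1) / 2`.
Scaling `x = √γ * y`, folding onto `y > 0` and substituting `t = y ^ 2` turn `∫ k` into
`γ ^ (1/2 - s)` times the Beta integral
`∫₀^∞ t ^ (u - 1) * (1 + t) ^ (-(u + v)) = Γ u Γ v / Γ (u + v)` with `u = 1/2`, `v = γ / 2`,
and `Cd` is exactly its reciprocal. The tail is `Cd * (x ^ 2 / (x ^ 2 + γ)) ^ s → Cd`.
The likelihood ratio is `d (x / θ) / d x = ((x ^ 2 + γ) / (x ^ 2 / θ ^ 2 + γ)) ^ s`, whose base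
increases with `x ^ 2` because `θ > 1`. -/

open MeasureTheory Filter

open Set Real Topology

theorem integral_Ioo_rpow_mul_one_sub_rpow {u v : ℝ} (hu : 0 < u) (hv : 0 < v) :
    ∫ x in Ioo (0 : ℝ) 1, x ^ (u - 1) * (1 - x) ^ (v - 1) = Gamma u * Gamma v / Gamma (u + v) := by
  have hbeta : Complex.betaIntegral u v
      = ↑(∫ x in Ioo (0 : ℝ) 1, x ^ (u - 1) * (1 - x) ^ (v - 1)) := by
    rw [Complex.betaIntegral, intervalIntegral.integral_of_le zero_le_one,
      integral_Ioc_eq_integral_Ioo, ← integral_complex_ofReal]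
    refine setIntegral_congr_fun measurableSet_Ioo fun x hx => ?_
    push_cast [Complex.ofReal_cpow hx.1.le, Complex.ofReal_cpow (sub_nonneg.2 hx.2.le)]
    rfl
  have hGamma := Complex.betaIntegral_eq_Gamma_mul_div u v (by simpa) (by simpa)
  rw [hbeta, ← Complex.ofReal_add, Complex.Gamma_ofReal, Complex.Gamma_ofReal,
    Complex.Gamma_ofReal] at hGamma
  exact_mod_cast hGamma

theorem integral_Ioi_rpow_mul_one_add_rpow_neg {u v : ℝ} (hu : 0 < u) (hv : 0 < v) :
    ∫ t in Ioi (0 : ℝ), t ^ (u - 1) * (1 + t) ^ (-(u + v)) = Gamma u * Gamma v / Gamma (u + v) := by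
  set f : ℝ → ℝ := fun x => x / (1 - x)
  have hf_image : f '' Ioo 0 1 = Ioi 0 := by
    ext t
    refine ⟨?_, fun (ht : 0 < t) => ⟨t / (1 + t), ?_, ?_⟩⟩
    · rintro ⟨x, hx, rfl⟩
      exact div_pos hx.1 (sub_pos.2 hx.2)
    · exact ⟨by positivity, (div_lt_one (by positivity)).2 (by linarith)⟩
    · simp only [f]
      field_simp
      ring
  have hf_deriv : ∀ x ∈ Ioo (0 : ℝ) 1, HasDerivWithinAt f ((1 - x) ^ 2)⁻¹ (Ioo 0 1) x := by
    intro x hx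
    have hx1 := (sub_pos.2 hx.2).ne'
    refine ((hasDerivAt_id' x).div ((hasDerivAt_id' x).const_sub 1)
      hx1).hasDerivWithinAt.congr_deriv ?_
    field_simp
    ring
  have hf_inj : InjOn f (Ioo 0 1) := by
    intro a ha b hb hab
    have := (sub_pos.2 ha.2).ne'
    have := (sub_pos.2 hb.2).ne'
    simp only [f] at hab
    field_simp at hab
    linarith
  rw [← hf_image, integral_image_eq_integral_abs_deriv_smul measurableSet_Ioo hf_deriv hf_inj,
    ← integral_Ioo_rpow_mul_one_sub_rpow hu hv]
  refine setIntegral_congr_fun measurableSet_Ioo fun x hx => ?_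
  have hx0 : 0 < x := hx.1
  have hx1 : 0 < 1 - x := sub_pos.2 hx.2
  have hone_add : 1 + x / (1 - x) = (1 - x)⁻¹ := by field_simp; ring
  simp only [f, smul_eq_mul, hone_add, abs_inv, abs_pow, abs_of_pos hx1,
    div_rpow hx0.le hx1.le, inv_rpow hx1.le, rpow_neg hx1.le]
  have hsplit : (1 - x) ^ (u + v) = (1 - x) ^ (u - 1) * (1 - x) ^ (v - 1) * (1 - x) ^ 2 := by
    rw [← rpow_natCast, ← rpow_add hx1, ← rpow_add hx1]
    congr 1
    push_cast
    ring
  rw [inv_inv, hsplit]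
  field_simp

theorem integral_Ioi_one_add_sq_rpow_neg {s : ℝ} (hs : 1 / 2 < s) :
    ∫ x in Ioi (0 : ℝ), (1 + x ^ 2) ^ (-s) = √π * Gamma (s - 1 / 2) / (2 * Gamma s) := by
  have hbeta := integral_Ioi_rpow_mul_one_add_rpow_neg one_half_pos (sub_pos.2 hs)
  rw [add_sub_cancel, Gamma_one_half_eq, ← integral_comp_rpow_Ioi_of_pos two_pos] at hbeta
  rw [mul_comm 2, ← div_div, ← hbeta, ← integral_div]
  refine setIntegral_congr_fun measurableSet_Ioi fun x (hx : 0 < x) => ?_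
  have hpow : x ^ ((2 : ℝ) - 1) * x ^ (2 * (1 / 2 - 1 : ℝ)) = 1 := by
    rw [← rpow_add hx]; norm_num
  rw [smul_eq_mul, ← rpow_mul hx.le, rpow_two]
  linear_combination (-(1 + x ^ 2) ^ (-s)) * hpow

theorem integral_one_add_sq_rpow_neg {s : ℝ} (hs : 1 / 2 < s) :
    ∫ x, (1 + x ^ 2) ^ (-s) = √π * Gamma (s - 1 / 2) / Gamma s := by
  have heven := integral_comp_abs (f := fun x => (1 + x ^ 2) ^ (-s))
  simp only [sq_abs] at heven
  rw [heven, integral_Ioi_one_add_sq_rpow_neg hs]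
  have := (Gamma_pos_of_pos (by linarith : 0 < s)).ne'
  field_simp

theorem sq_add_rpow_neg_eq {a : ℝ} (ha : 0 < a) (s x : ℝ) :
    (x ^ 2 + a) ^ (-s) = a ^ (-s) * (1 + (x / √a) ^ 2) ^ (-s) := by
  rw [← mul_rpow ha.le (by positivity), div_pow, sq_sqrt ha.le, mul_add, mul_div_cancel₀ _ ha.ne',
    mul_one, add_comm]

theorem integral_sq_add_rpow_neg {a s : ℝ} (ha : 0 < a) (hs : 1 / 2 < s) :
    ∫ x, (x ^ 2 + a) ^ (-s) = a ^ (1 / 2 - s) * (√π * Gamma (s - 1 / 2) / Gamma s) := by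
  simp_rw [sq_add_rpow_neg_eq ha, integral_const_mul]
  rw [Measure.integral_comp_div (fun y => (1 + y ^ 2) ^ (-s)), integral_one_add_sq_rpow_neg hs,
    smul_eq_mul, abs_of_pos (sqrt_pos.2 ha), sqrt_eq_rpow, ← mul_assoc, ← rpow_add ha]
  ring_nf

theorem integrable_sq_add_rpow_neg {a s : ℝ} (ha : 0 < a) (hs : 1 / 2 < s) :
    Integrable fun x : ℝ => (x ^ 2 + a) ^ (-s) := by
  have h := integrable_rpow_neg_one_add_norm_sq (E := ℝ) (μ := volume) (r := 2 * s)
    (by simp; linarith)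
  simp only [norm_eq_abs, sq_abs, neg_div, mul_div_cancel_left₀ s two_ne_zero] at h
  simp_rw [sq_add_rpow_neg_eq ha]
  exact (h.comp_div (sqrt_pos.2 ha).ne').const_mul _

theorem tendsto_sq_add_rpow_neg_mul_rpow {a : ℝ} (ha : 0 ≤ a) (t : ℝ) :
    Tendsto (fun x : ℝ => (x ^ 2 + a) ^ (-(t / 2)) * x ^ t) atTop (𝓝 1) := by
  have hlim : Tendsto (fun x : ℝ => (1 + a / x ^ 2) ^ (-(t / 2))) atTop (𝓝 1) := by
    have h : Tendsto (fun x : ℝ => a / x ^ 2) atTop (𝓝 0) :=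
      tendsto_const_nhds.div_atTop (tendsto_pow_atTop two_ne_zero)
    simpa using (h.const_add 1).rpow_const (p := -(t / 2)) (by norm_num)
  refine hlim.congr' ?_
  filter_upwards [eventually_gt_atTop 0] with x hx
  have hsplit : x ^ 2 + a = x ^ 2 * (1 + a / x ^ 2) := by field_simp
  have hxt : (x ^ 2) ^ (-(t / 2)) = (x ^ t)⁻¹ := by
    rw [← rpow_natCast, ← rpow_mul hx.le, ← rpow_neg hx.le]
    ring_nf
  rw [hsplit, mul_rpow (by positivity) (by positivity), hxt]
  field_simp

theorem strictMonoOn_sq_add_rpow_neg_div {a s θ : ℝ} (ha : 0 < a) (hs : 0 < s) (hθ : 1 < θ) :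
    StrictMonoOn (fun x => ((x / θ) ^ 2 + a) ^ (-s) / (x ^ 2 + a) ^ (-s)) (Ioi 0) := by
  intro x (hx : 0 < x) y (hy : 0 < y) hxy
  have hc : (θ ^ 2)⁻¹ < 1 := inv_lt_one_of_one_lt₀ (one_lt_pow₀ hθ two_ne_zero)
  have hratio : ∀ z : ℝ, ((z / θ) ^ 2 + a) ^ (-s) / (z ^ 2 + a) ^ (-s)
      = ((z ^ 2 + a) / ((z / θ) ^ 2 + a)) ^ s := fun z => by
    rw [rpow_neg (by positivity), rpow_neg (by positivity), inv_div_inv,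
      div_rpow (by positivity) (by positivity)]
  simp only [hratio]
  refine rpow_lt_rpow (by positivity) ?_ hs
  have hθx : ∀ z : ℝ, (z / θ) ^ 2 = z ^ 2 * (θ ^ 2)⁻¹ := fun z => by ring
  rw [div_lt_div_iff₀ (by positivity) (by positivity), hθx, hθx]
  have hxy2 : x ^ 2 < y ^ 2 := pow_lt_pow_left₀ hxy hx.le two_ne_zero
  nlinarith [mul_pos (mul_pos ha (sub_pos.2 hxy2)) (sub_pos.2 hc)]

/-- For every `γ > 0`, the Student's t density with `γ` degrees of freedom,
`d x = Cd * (x ^ 2 + γ) ^ (-(γ + 1) / 2)` with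
`Cd = γ ^ (γ/2) * Γ((γ+1)/2) / (√π * Γ(γ/2))`, is an MPT density with tail index `γ` and
tail constant `Cd`; moreover `d` is even and strictly positive everywhere. -/
theorem studentT_isMPT (γ : ℝ) (hγ : 0 < γ)
    (Cd : ℝ)
    (hCd : Cd = γ ^ (γ / 2) * Real.Gamma ((γ + 1) / 2)
      / (Real.sqrt Real.pi * Real.Gamma (γ / 2)))
    (d : ℝ → ℝ) (hd : ∀ x, d x = Cd * (x ^ 2 + γ) ^ (-((γ + 1) / 2))) :
    IsMPT d γ Cd ∧ (∀ x, d (-x) = d x) ∧ (∀ x, 0 < d x) := by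
  have hs : 1 / 2 < (γ + 1) / 2 := by linarith
  have hCd_pos : 0 < Cd := by rw [hCd]; positivity
  obtain rfl : d = fun x => Cd * (x ^ 2 + γ) ^ (-((γ + 1) / 2)) := funext hd
  have hpos : ∀ x : ℝ, 0 < Cd * (x ^ 2 + γ) ^ (-((γ + 1) / 2)) := fun x => by positivity
  have heven : ∀ x : ℝ, Cd * ((-x) ^ 2 + γ) ^ (-((γ + 1) / 2))
      = Cd * (x ^ 2 + γ) ^ (-((γ + 1) / 2)) := fun x => by rw [neg_sq]
  refine ⟨⟨hγ, hCd_pos, fun x => (hpos x).le, (integrable_sq_add_rpow_neg hγ hs).const_mul Cd,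
    ?_, Or.inl heven, fun x _ => hpos x, ?_, fun θ hθ => ?_⟩, heven, hpos⟩
  · rw [integral_const_mul, integral_sq_add_rpow_neg hγ hs, hCd,
      show (γ + 1) / 2 - 1 / 2 = γ / 2 by ring, show 1 / 2 - (γ + 1) / 2 = -(γ / 2) by ring,
      rpow_neg hγ.le]
    field_simp
  · simpa [mul_assoc] using (tendsto_sq_add_rpow_neg_mul_rpow hγ.le (γ + 1)).const_mul Cd
  · simpa only [mul_div_mul_left _ _ hCd_pos.ne'] using
      strictMonoOn_sq_add_rpow_neg_div hγ (by linarith) hθ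
end
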